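/- Let ψ ⊆ PG(n,2) with |ψ| odd and Q its reduced polynomial. Then deg Q ≤ d if and only if every d-flat of PG(n,2) meets ψ in an odd number of points; moreover deg Q ≥ d if and only if there exists a (d−1)-flat meeting ψ in an even number of points. -/
import Mathlib


/-- Evaluation of a squarefree (multilinear) polynomial given by its coefficients. -/
def mEval {ι : Type*} [Fintype ι] [DecidableEq ι]
    (c : Finset ι → ZMod 2) (x : ι → ZMod 2) : ZMod 2 :=
  ∑ s : Finset ι, c s * ∏ i ∈ s, x i

/-- Degree of a squarefree polynomial given by its coefficients. -/
def mDeg {ι : Type*} [Fintype ι] [DecidableEq ι] (c : Finset ι → ZMod 2) : ℕ :=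
  (Finset.univ.filter fun s : Finset ι => c s ≠ 0).sup Finset.card



noncomputable section Aux

attribute [local instance] Classical.propDecidable

open Finset Module

lemma zmod2_cases : ∀ a : ZMod 2, a = 0 ∨ a = 1 := by decide

lemma zmod2_add_self (a : ZMod 2) : a + a = 0 := by
  rcases zmod2_cases a with h | h <;> simp [h] <;> decide

variable {m : ℕ}

/-- sum of a monomial of degree < finrank X over a subspace X vanishes -/
lemma sum_monomial_eq_zero (X : Submodule (ZMod 2) (Fin m → ZMod 2))
    (t : Finset (Fin m)) (ht : t.card < Module.finrank (ZMod 2) X) :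
    ∑ x : X, ∏ i ∈ t, (x : Fin m → ZMod 2) i = 0 := by
  -- linear map restricting to coordinates in t
  let φ : X →ₗ[ZMod 2] (↥t → ZMod 2) :=
    { toFun := fun x i => (x : Fin m → ZMod 2) i.1
      map_add' := fun x y => rfl
      map_smul' := fun r x => rfl }
  have hker : LinearMap.ker φ ≠ ⊥ := by
    intro hbot
    have h1 := LinearMap.finrank_range_add_finrank_ker φ
    rw [hbot, finrank_bot] at h1
    have h2 : finrank (ZMod 2) (LinearMap.range φ) ≤ t.card := by
      have := Submodule.finrank_le (LinearMap.range φ)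
      rwa [Module.finrank_pi, Fintype.card_coe] at this
    omega
  obtain ⟨v, hv, hv0⟩ := Submodule.exists_mem_ne_zero_of_ne_bot hker
  have hvt : ∀ i ∈ t, (v : Fin m → ZMod 2) i = 0 := by
    intro i hi
    have : φ v = 0 := hv
    exact congrFun this ⟨i, hi⟩
  refine Finset.sum_ninvolution (fun x => x + v) ?_ ?_ (fun _ => Finset.mem_univ _) ?_
  · intro a
    have : ∀ i ∈ t, ((a + v : X) : Fin m → ZMod 2) i = (a : Fin m → ZMod 2) i := by
      intro i hi
      show (a : Fin m → ZMod 2) i + (v : Fin m → ZMod 2) i = _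
      rw [hvt i hi, add_zero]
    rw [Finset.prod_congr rfl this]
    exact zmod2_add_self _
  · intro a _ h
    exact hv0 (by simpa using (congrArg (· - a) h.symm).symm)
  · intro a
    have : v + v = 0 := by
      have := zmod2_add_self (1 : ZMod 2)
      calc v + v = (1 + 1 : ZMod 2) • v := by rw [add_smul, one_smul]
        _ = 0 := by rw [this, zero_smul]
    show a + v + v = a
    rw [add_assoc, this, add_zero]

/-- sum of mEval over a subspace of dimension > degree vanishes -/
lemma sum_mEval_eq_zero (c : Finset (Fin m) → ZMod 2)
    (X : Submodule (ZMod 2) (Fin m → ZMod 2)) (h : mDeg c < Module.finrank (ZMod 2) X) :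
    ∑ x : X, mEval c x = 0 := by
  unfold mEval
  rw [Finset.sum_comm]
  refine Finset.sum_eq_zero fun s _ => ?_
  rw [← Finset.mul_sum]
  rcases eq_or_ne (c s) 0 with h0 | h0
  · rw [h0, zero_mul]
  · have hs : s.card ≤ mDeg c :=
      Finset.le_sup (Finset.mem_filter.mpr ⟨Finset.mem_univ _, h0⟩)
    rw [sum_monomial_eq_zero X s (lt_of_le_of_lt hs h), mul_zero]

end Aux

section CoordSub
attribute [local instance] Classical.propDecidable
open Finset Module
variable {m : ℕ}

/-- the coordinate subspace supported on s -/
def coordSub (s : Finset (Fin m)) : Submodule (ZMod 2) (Fin m → ZMod 2) where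
  carrier := {x | ∀ i ∉ s, x i = 0}
  add_mem' := by intro a b ha hb i hi; show a i + b i = 0; rw [ha i hi, hb i hi, add_zero]
  zero_mem' := fun i _ => rfl
  smul_mem' := by intro r x hx i hi; show r * x i = 0; rw [hx i hi, mul_zero]

lemma mem_coordSub {s : Finset (Fin m)} {x : Fin m → ZMod 2} :
    x ∈ coordSub s ↔ ∀ i ∉ s, x i = 0 := Iff.rfl

noncomputable def coordEquiv (s : Finset (Fin m)) :
    coordSub s ≃ₗ[ZMod 2] (↥s → ZMod 2) where
  toFun x i := (x : Fin m → ZMod 2) i.1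
  map_add' x y := rfl
  map_smul' r x := rfl
  invFun f := ⟨fun i => if h : i ∈ s then f ⟨i, h⟩ else 0, fun i hi => dif_neg hi⟩
  left_inv := by
    intro x
    apply Subtype.ext
    funext i
    by_cases h : i ∈ s
    · simp [h]
    · simp [h, x.2 i h]
  right_inv := by
    intro f
    funext i
    simp [i.2]

lemma finrank_coordSub (s : Finset (Fin m)) :
    Module.finrank (ZMod 2) (coordSub s) = s.card := by
  rw [(coordEquiv s).finrank_eq, Module.finrank_pi, Fintype.card_coe]

lemma sum_mEval_coordSub (c : Finset (Fin m) → ZMod 2) (s : Finset (Fin m)) :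
    ∑ x : coordSub s, mEval c x = c s := by
  unfold mEval
  rw [Finset.sum_comm]
  rw [Finset.sum_eq_single_of_mem s (Finset.mem_univ s)]
  · rw [← Finset.mul_sum]
    have hone : ∑ x : coordSub s, ∏ i ∈ s, (x : Fin m → ZMod 2) i = 1 := by
      have hamem : (fun i => if i ∈ s then (1 : ZMod 2) else 0) ∈ coordSub s :=
        fun i hi => if_neg hi
      rw [Fintype.sum_eq_single (⟨_, hamem⟩ : coordSub s)]
      · exact Finset.prod_eq_one fun i hi => if_pos hi
      · intro x hx
        have : (x : Fin m → ZMod 2) ≠ fun i => if i ∈ s then (1 : ZMod 2) else 0 := by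
          intro h; exact hx (Subtype.ext h)
        obtain ⟨i, hi⟩ := Function.ne_iff.mp this
        by_cases h : i ∈ s
        · rcases zmod2_cases ((x : Fin m → ZMod 2) i) with h0 | h1
          · exact Finset.prod_eq_zero h h0
          · exact absurd (by rw [h1, if_pos h]) hi
        · exact absurd (by rw [x.2 i h, if_neg h]) hi
    rw [hone, mul_one]
  · intro t _ hts
    rw [← Finset.mul_sum]
    by_cases hsub : t ⊆ s
    · have : t.card < Module.finrank (ZMod 2) (coordSub s) := by
        rw [finrank_coordSub]
        exact Finset.card_lt_card (Finset.ssubset_iff_subset_ne.mpr ⟨hsub, hts⟩)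
      rw [sum_monomial_eq_zero _ t this, mul_zero]
    · obtain ⟨i, hit, his⟩ := Finset.not_subset.mp hsub
      have : ∑ x : coordSub s, ∏ j ∈ t, (x : Fin m → ZMod 2) j = 0 :=
        Finset.sum_eq_zero fun x _ => Finset.prod_eq_zero hit (x.2 i his)
      rw [this, mul_zero]

end CoordSub

section Parity
attribute [local instance] Classical.propDecidable
open Finset Module
variable {m : ℕ}

lemma natCast_zmod2_eq_zero_iff_even (k : ℕ) : (k : ZMod 2) = 0 ↔ Even k := by
  rw [ZMod.natCast_eq_zero_iff, ← even_iff_two_dvd]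

lemma sum_mEval_parity (ψ : Finset (Fin m → ZMod 2)) (hψ : (0 : Fin m → ZMod 2) ∉ ψ)
    (c : Finset (Fin m) → ZMod 2)
    (hrep : ∀ x, mEval c x = 0 ↔ x = 0 ∨ x ∈ ψ)
    (X : Submodule (ZMod 2) (Fin m → ZMod 2)) (hX : 1 ≤ Module.finrank (ZMod 2) X) :
    ∑ x : X, mEval c x = 1 + (((ψ : Set (Fin m → ZMod 2)) ∩ X).ncard : ZMod 2) := by
  have hQ : ∀ v : Fin m → ZMod 2, mEval c v =
      1 + ((if v = 0 then (1 : ZMod 2) else 0) + (if v ∈ ψ then (1 : ZMod 2) else 0)) := by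
    intro v
    by_cases h : v = 0 ∨ v ∈ ψ
    · rw [(hrep v).mpr h]
      rcases h with h | h
      · rw [if_pos h, if_neg (by rw [h]; exact hψ)]; decide
      · rw [if_pos h, if_neg (by rintro rfl; exact hψ h)]; decide
    · push_neg at h
      rw [if_neg h.1, if_neg h.2]
      rcases zmod2_cases (mEval c v) with h0 | h1
      · exact absurd ((hrep v).mp h0) (by push_neg; exact h)
      · rw [h1]; decide
  calc ∑ x : X, mEval c x
      = ∑ x : X, (1 + ((if (x : Fin m → ZMod 2) = 0 then (1 : ZMod 2) else 0)
          + (if (x : Fin m → ZMod 2) ∈ ψ then (1 : ZMod 2) else 0))) := by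
        exact Finset.sum_congr rfl fun x _ => hQ x
    _ = (∑ _x : X, (1 : ZMod 2)) + ((∑ x : X, if (x : Fin m → ZMod 2) = 0 then (1 : ZMod 2) else 0)
          + ∑ x : X, if (x : Fin m → ZMod 2) ∈ ψ then (1 : ZMod 2) else 0) := by
        rw [Finset.sum_add_distrib, Finset.sum_add_distrib]
    _ = 1 + (((ψ : Set (Fin m → ZMod 2)) ∩ X).ncard : ZMod 2) := ?_
  have h1 : (∑ _x : X, (1 : ZMod 2)) = 0 := by
    rw [Finset.sum_const, nsmul_eq_mul, mul_one]
    have hcard : Fintype.card X = Fintype.card (ZMod 2) ^ Module.finrank (ZMod 2) X :=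
      card_eq_pow_finrank
    rw [Finset.card_univ, hcard, ZMod.card, Nat.cast_pow]
    rw [show ((2 : ℕ) : ZMod 2) = 0 by decide, zero_pow (by omega)]
  have h2 : (∑ x : X, if (x : Fin m → ZMod 2) = 0 then (1 : ZMod 2) else 0) = 1 := by
    rw [Fintype.sum_eq_single (⟨0, X.zero_mem⟩ : X)]
    · rw [if_pos rfl]
    · intro x hx
      exact if_neg fun h => hx (Subtype.ext h)
  have h3 : (∑ x : X, if (x : Fin m → ZMod 2) ∈ ψ then (1 : ZMod 2) else 0)
      = (((ψ : Set (Fin m → ZMod 2)) ∩ X).ncard : ZMod 2) := by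
    have hs : ∀ v : Fin m → ZMod 2, v ∈ Finset.univ.filter (· ∈ X) ↔ v ∈ X := by
      intro v; simp
    rw [← Finset.sum_subtype (Finset.univ.filter (· ∈ X)) hs
        (fun v => if v ∈ ψ then (1 : ZMod 2) else 0)]
    rw [Finset.sum_boole]
    have hfe : ((Finset.univ.filter (· ∈ X)).filter (· ∈ ψ)) = ψ.filter (· ∈ X) := by
      ext v; simp [and_comm]
    have hset : ((ψ.filter (· ∈ X) : Finset (Fin m → ZMod 2)) : Set (Fin m → ZMod 2))
        = (ψ : Set (Fin m → ZMod 2)) ∩ X := by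
      ext v; simp [Set.mem_inter_iff]
    rw [hfe, ← Set.ncard_coe_finset, hset]
  rw [h1, h2, h3, zero_add]

end Parity

section Descent
attribute [local instance] Classical.propDecidable
open Finset Module
variable {m : ℕ}

/-- sum over the kernel hyperplane in terms of a sum over X -/
lemma sum_ker_eq (Q : (Fin m → ZMod 2) → ZMod 2) (X : Submodule (ZMod 2) (Fin m → ZMod 2))
    (φ : X →ₗ[ZMod 2] ZMod 2) :
    ∑ y : (LinearMap.ker φ).map X.subtype, Q y
      = ∑ x : X, if φ x = 0 then Q x else 0 := by
  let e := (Submodule.equivMapOfInjective X.subtype X.injective_subtype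
    (LinearMap.ker φ)).toEquiv
  rw [← Equiv.sum_comp e (fun y : (LinearMap.ker φ).map X.subtype => Q y)]
  have h1 : ∀ x : LinearMap.ker φ, Q ((e x : (LinearMap.ker φ).map X.subtype) : Fin m → ZMod 2)
      = Q ((x : X) : Fin m → ZMod 2) := by
    intro x
    congr 1
  rw [Finset.sum_congr rfl fun x _ => h1 x]
  have hs : ∀ x : X, x ∈ Finset.univ.filter (fun x : X => φ x = 0) ↔ x ∈ LinearMap.ker φ := by
    intro x; simp [LinearMap.mem_ker]
  rw [← Finset.sum_subtype (Finset.univ.filter (fun x : X => φ x = 0)) hs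
      (fun x : X => Q x)]
  rw [Finset.sum_filter]

lemma finrank_ker_map (X : Submodule (ZMod 2) (Fin m → ZMod 2)) (k : ℕ)
    (hX : Module.finrank (ZMod 2) X = k + 1)
    (φ : X →ₗ[ZMod 2] ZMod 2) (hφ : φ ≠ 0) :
    Module.finrank (ZMod 2) ((LinearMap.ker φ).map X.subtype) = k := by
  rw [Submodule.finrank_map_subtype_eq]
  have h1 := LinearMap.finrank_range_add_finrank_ker φ
  rw [hX] at h1
  have hr1 : Module.finrank (ZMod 2) (LinearMap.range φ) ≤ 1 := by
    have := Submodule.finrank_le (LinearMap.range φ)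
    rwa [Module.finrank_self] at this
  have hr0 : Module.finrank (ZMod 2) (LinearMap.range φ) ≠ 0 := by
    intro h0
    rw [Submodule.finrank_eq_zero, LinearMap.range_eq_bot] at h0
    exact hφ h0
  omega

lemma descend_one (Q : (Fin m → ZMod 2) → ZMod 2) (X : Submodule (ZMod 2) (Fin m → ZMod 2))
    (k : ℕ) (hX : Module.finrank (ZMod 2) X = k + 2)
    (hS : ∑ x : X, Q x = 1) :
    ∃ Y : Submodule (ZMod 2) (Fin m → ZMod 2),
      Module.finrank (ZMod 2) Y = k + 1 ∧ ∑ y : Y, Q y = 1 := by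
  let b : Basis (Fin (k + 2)) (ZMod 2) X := Module.finBasisOfFinrankEq _ _ hX
  let f : X →ₗ[ZMod 2] ZMod 2 := b.coord 0
  let g : X →ₗ[ZMod 2] ZMod 2 := b.coord 1
  have hf0 : f (b 0) = 1 := by simp [f, Basis.coord_apply]
  have hg0 : g (b 0) = 0 := by
    simp [g, Basis.coord_apply, Finsupp.single_eq_of_ne (show (0 : Fin (k+2)) ≠ 1 from fun h => by simpa using congrArg Fin.val h)]
  have hg1 : g (b 1) = 1 := by simp [g, Basis.coord_apply]
  have hf1 : f (b 1) = 0 := by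
    simp [f, Basis.coord_apply, Finsupp.single_eq_of_ne (show (1 : Fin (k+2)) ≠ 0 from fun h => by simpa using congrArg Fin.val h)]
  have hfne : f ≠ 0 := fun h => by rw [h] at hf0; simp at hf0
  have hgne : g ≠ 0 := fun h => by rw [h] at hg1; simp at hg1
  have hfgne : f + g ≠ 0 := fun h => by
    have := congrArg (fun φ : X →ₗ[ZMod 2] ZMod 2 => φ (b 0)) h
    simp [hf0, hg0] at this
  have key : (∑ x : X, if f x = 0 then Q x else 0)
      + ((∑ x : X, if g x = 0 then Q x else 0)
      + (∑ x : X, if (f + g) x = 0 then Q x else 0)) = 1 := by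
    rw [← Finset.sum_add_distrib, ← Finset.sum_add_distrib, ← hS]
    refine Finset.sum_congr rfl fun x _ => ?_
    have hfg : (f + g) x = f x + g x := rfl
    rcases zmod2_cases (f x) with hf | hf <;> rcases zmod2_cases (g x) with hg | hg <;>
      rw [hfg, hf, hg] <;>
      simp [zmod2_add_self, show (1 : ZMod 2) + 1 = 0 from by decide]
  -- one of the three sums is 1
  have pick : ∃ φ : X →ₗ[ZMod 2] ZMod 2, φ ≠ 0 ∧ (∑ x : X, if φ x = 0 then Q x else 0) = 1 := by
    rcases zmod2_cases (∑ x : X, if f x = 0 then Q x else 0) with h1 | h1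
    · rcases zmod2_cases (∑ x : X, if g x = 0 then Q x else 0) with h2 | h2
      · rcases zmod2_cases (∑ x : X, if (f + g) x = 0 then Q x else 0) with h3 | h3
        · rw [h1, h2, h3] at key; simp at key
        · exact ⟨f + g, hfgne, h3⟩
      · exact ⟨g, hgne, h2⟩
    · exact ⟨f, hfne, h1⟩
  obtain ⟨φ, hφne, hφ1⟩ := pick
  refine ⟨(LinearMap.ker φ).map X.subtype, ?_, ?_⟩
  · exact finrank_ker_map X (k + 1) hX φ hφne
  · rw [sum_ker_eq]; exact hφ1

lemma descend (Q : (Fin m → ZMod 2) → ZMod 2) (e : ℕ) :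
    ∀ (j : ℕ) (X : Submodule (ZMod 2) (Fin m → ZMod 2)),
      Module.finrank (ZMod 2) X = e + 1 + j → (∑ x : X, Q x) = 1 →
      ∃ Y : Submodule (ZMod 2) (Fin m → ZMod 2),
        Module.finrank (ZMod 2) Y = e + 1 ∧ ∑ y : Y, Q y = 1 := by
  intro j
  induction j with
  | zero => intro X hX hS; exact ⟨X, hX, hS⟩
  | succ j ih =>
    intro X hX hS
    obtain ⟨Y, hY, hSY⟩ := descend_one Q X (e + j) (by omega) hS
    exact ih Y (by omega) hSY

end Descent

section Main
attribute [local instance] Classical.propDecidable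
open Finset Module

/-- A `d`-flat of `PG(n,2)` is (the set of nonzero vectors of) a `(d+1)`-dimensional
linear subspace of `GF(2)^(n+1)`.  For `ψ` of odd size with reduced polynomial `Q`
(coefficients `c`): `deg Q ≤ d` iff every `d`-flat meets `ψ` oddly, and `deg Q ≥ d`
iff some `(d-1)`-flat meets `ψ` evenly. -/
theorem stmt2 (n d : ℕ) (ψ : Finset (Fin (n + 1) → ZMod 2))
    (hψ : (0 : Fin (n + 1) → ZMod 2) ∉ ψ) (hodd : Odd ψ.card)
    (c : Finset (Fin (n + 1)) → ZMod 2) (hc0 : c ∅ = 0)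
    (hrep : ∀ x, mEval c x = 0 ↔ x = 0 ∨ x ∈ ψ) :
    (mDeg c ≤ d ↔
      ∀ X : Submodule (ZMod 2) (Fin (n + 1) → ZMod 2),
        Module.finrank (ZMod 2) X = d + 1 → Odd (((ψ : Set (Fin (n + 1) → ZMod 2)) ∩ X).ncard)) ∧
    (d ≤ mDeg c ↔
      ∃ X : Submodule (ZMod 2) (Fin (n + 1) → ZMod 2),
        Module.finrank (ZMod 2) X = d ∧ Even (((ψ : Set (Fin (n + 1) → ZMod 2)) ∩ X).ncard)) := by
  have key : ∀ X : Submodule (ZMod 2) (Fin (n + 1) → ZMod 2), 1 ≤ Module.finrank (ZMod 2) X →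
      ((∑ x : X, mEval c x = 0 ↔ Odd (((ψ : Set (Fin (n + 1) → ZMod 2)) ∩ X).ncard)) ∧
       (∑ x : X, mEval c x = 1 ↔ Even (((ψ : Set (Fin (n + 1) → ZMod 2)) ∩ X).ncard))) := by
    intro X hX1
    have hp := sum_mEval_parity ψ hψ c hrep X hX1
    rcases Nat.even_or_odd (((ψ : Set (Fin (n + 1) → ZMod 2)) ∩ X).ncard) with he | ho
    · have h0 : ((((ψ : Set (Fin (n + 1) → ZMod 2)) ∩ X).ncard : ZMod 2)) = 0 :=
        (natCast_zmod2_eq_zero_iff_even _).mpr he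
      rw [h0, add_zero] at hp
      constructor
      · constructor
        · intro h; rw [hp] at h; exact absurd h (by decide)
        · intro h; exact absurd h (Nat.not_odd_iff_even.mpr he)
      · exact ⟨fun _ => he, fun _ => hp⟩
    · have h1 : ((((ψ : Set (Fin (n + 1) → ZMod 2)) ∩ X).ncard : ZMod 2)) = 1 := by
        refine (zmod2_cases _).resolve_left fun h0 => ?_
        exact (Nat.not_even_iff_odd.mpr ho) ((natCast_zmod2_eq_zero_iff_even _).mp h0)
      rw [h1, show (1 : ZMod 2) + 1 = 0 from by decide] at hp
      constructor
      · exact ⟨fun _ => ho, fun _ => hp⟩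
      · constructor
        · intro h; rw [hp] at h; exact absurd h (by decide)
        · intro h; exact absurd h (Nat.not_even_iff_odd.mpr ho)
  constructor
  · constructor
    · intro hdeg X hX
      have hlt : mDeg c < Module.finrank (ZMod 2) X := by omega
      exact ((key X (by omega)).1).mp (sum_mEval_eq_zero c X hlt)
    · intro hall
      by_contra hdeg
      have hlt : d + 1 ≤ mDeg c := by omega
      obtain ⟨s, hsmem, hscard⟩ :=
        (Finset.le_sup_iff (show (⊥ : ℕ) < d + 1 by simp)).mp hlt
      have hcs : c s = 1 := (zmod2_cases _).resolve_left (Finset.mem_filter.mp hsmem).2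
      have hS : ∑ x : coordSub s, mEval c x = 1 := by
        rw [sum_mEval_coordSub]; exact hcs
      obtain ⟨Y, hY, hSY⟩ := descend (mEval c) d (s.card - (d + 1)) (coordSub s)
        (by rw [finrank_coordSub]; omega) hS
      have heven := ((key Y (by omega)).2).mp hSY
      exact (Nat.not_odd_iff_even.mpr heven) (hall Y hY)
  · constructor
    · intro hd
      rcases Nat.eq_zero_or_pos d with rfl | hdpos
      · refine ⟨⊥, finrank_bot _ _, ?_⟩
        have : ((ψ : Set (Fin (n + 1) → ZMod 2)) ∩
            ((⊥ : Submodule (ZMod 2) (Fin (n + 1) → ZMod 2)) :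
              Set (Fin (n + 1) → ZMod 2))) = ∅ := by
          ext v
          simp only [Set.mem_inter_iff, SetLike.mem_coe, Submodule.mem_bot,
            Set.mem_empty_iff_false, iff_false, not_and]
          intro hv hv0
          subst hv0
          exact hψ (by simpa using hv)
        rw [this, Set.ncard_empty]
        exact Even.zero
      · obtain ⟨s, hsmem, hscard⟩ :=
          (Finset.le_sup_iff (show (⊥ : ℕ) < d by simpa using hdpos)).mp hd
        have hcs : c s = 1 := (zmod2_cases _).resolve_left (Finset.mem_filter.mp hsmem).2
        have hS : ∑ x : coordSub s, mEval c x = 1 := by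
          rw [sum_mEval_coordSub]; exact hcs
        obtain ⟨Y, hY, hSY⟩ := descend (mEval c) (d - 1) (s.card - d) (coordSub s)
          (by rw [finrank_coordSub]; omega) hS
        have hYd : Module.finrank (ZMod 2) Y = d := by omega
        exact ⟨Y, hYd, ((key Y (by omega)).2).mp hSY⟩
    · rintro ⟨X, hX, heven⟩
      rcases Nat.eq_zero_or_pos d with rfl | hdpos
      · exact Nat.zero_le _
      · by_contra h
        have h0 := sum_mEval_eq_zero c X (by omega)
        have h1 := ((key X (by omega)).2).mpr heven
        rw [h0] at h1
        exact absurd h1 (by decide)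

end Main
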